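/- The quantity 2 · V(π/4) / π², where V(π/4) = 2π ∫₀^{π/4} ∫_{−π/2}^{π/2} τ · sin(τ cos v) dv dτ, satisfies 0.3946 < 2 · V(π/4) / π² < 0.3947. (This is the density δ(R₂, K₂) ≈ 0.39461737 of the simply transitive packing with R₂ = π/4 in equation (2.9) of the paper: the Dirichlet–Voronoi cell is a trigonal prism of spherical base area π/2 and height π, hence of volume π²/2.) -/

import Mathlib

open Real

/-- The volume of the geodesic ball of radius `ρ` in `S² × ℝ` geometry
(Theorem 2.4 of the paper). -/
noncomputable def ballVol (ρ : ℝ) : ℝ :=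
  2 * π * ∫ τ in (0 : ℝ)..ρ, ∫ v in (-(π / 2))..(π / 2), τ * Real.sin (τ * Real.cos v)

/-!
For `0 ≤ x` with `x ^ 2 ≤ 6` the Maclaurin series of `sin x` is alternating with decreasing
terms, so its partial sums with an even (odd) number of terms bound `sin x` from below (above).
Substituting these polynomials for `sin` in the double integral defining `V(ρ)` preserves the
inequalities, and their double integrals are explicit because `∫ cos ^ (2i+1)` over
`[-π/2, π/2]` is a Wallis product. With four terms below and three above, the density
`2 V(π/4) / π²` is squeezed between two polynomials in `π`, which `3.141592 < π < 3.141593`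
evaluates.
-/

open Finset Nat

noncomputable def sinTaylor (n : ℕ) (x : ℝ) : ℝ :=
  ∑ i ∈ range n, (-1) ^ i * (x ^ (2 * i + 1) / (2 * i + 1)!)

lemma antitone_sin_series_term {x : ℝ} (hx₀ : 0 ≤ x) (hx : x ^ 2 ≤ 6) :
    Antitone fun i : ℕ ↦ x ^ (2 * i + 1) / (2 * i + 1)! := by
  refine antitone_nat_of_succ_le fun i ↦ ?_
  have hfact : ((2 * (i + 1) + 1)! : ℝ) = (2 * i + 1)! * ((2 * i + 2) * (2 * i + 3)) := by
    rw [show 2 * (i + 1) + 1 = (2 * i + 1) + 1 + 1 by ring, factorial_succ, factorial_succ]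
    push_cast
    ring
  have hratio : x ^ 2 / ((2 * i + 2) * (2 * i + 3)) ≤ 1 :=
    div_le_one_of_le₀ (by nlinarith) (by positivity)
  calc x ^ (2 * (i + 1) + 1) / (2 * (i + 1) + 1)!
      = x ^ (2 * i + 1) / (2 * i + 1)! * (x ^ 2 / ((2 * i + 2) * (2 * i + 3))) := by
        rw [hfact]
        field_simp
        ring
    _ ≤ x ^ (2 * i + 1) / (2 * i + 1)! := mul_le_of_le_one_right (by positivity) hratio

lemma tendsto_sinTaylor (x : ℝ) :
    Filter.Tendsto (sinTaylor · x) Filter.atTop (nhds (sin x)) := by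
  simpa only [sinTaylor, mul_div_assoc] using (Real.hasSum_sin x).tendsto_sum_nat

lemma sinTaylor_even_le_sin (k : ℕ) {x : ℝ} (hx₀ : 0 ≤ x) (hx : x ^ 2 ≤ 6) :
    sinTaylor (2 * k) x ≤ sin x :=
  (antitone_sin_series_term hx₀ hx).alternating_series_le_tendsto (tendsto_sinTaylor x) k

lemma sin_le_sinTaylor_odd (k : ℕ) {x : ℝ} (hx₀ : 0 ≤ x) (hx : x ^ 2 ≤ 6) :
    sin x ≤ sinTaylor (2 * k + 1) x :=
  (antitone_sin_series_term hx₀ hx).tendsto_le_alternating_series (tendsto_sinTaylor x) k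

lemma integral_cos_pow_odd (n : ℕ) :
    ∫ v in (-(π / 2))..(π / 2), cos v ^ (2 * n + 1) =
      2 * ∏ i ∈ range n, (2 * (i : ℝ) + 2) / (2 * i + 3) := by
  simp_rw [← integral_sin_pow_odd, ← cos_sub_pi_div_two,
    intervalIntegral.integral_comp_sub_right (fun x ↦ cos x ^ (2 * n + 1)), zero_sub, sub_half]

noncomputable def ballIntegral (f : ℝ → ℝ) (ρ : ℝ) : ℝ :=
  ∫ τ in (0 : ℝ)..ρ, ∫ v in (-(π / 2))..(π / 2), τ * f (τ * cos v)

lemma ballVol_eq_two_pi_mul_ballIntegral (ρ : ℝ) : ballVol ρ = 2 * π * ballIntegral sin ρ :=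
  rfl

lemma ballIntegral_mono {f g : ℝ → ℝ} (hf : Continuous f) (hg : Continuous g) {ρ : ℝ}
    (hρ : 0 ≤ ρ) (hfg : ∀ x ∈ Set.Icc 0 ρ, f x ≤ g x) :
    ballIntegral f ρ ≤ ballIntegral g ρ := by
  have hcont (h : ℝ → ℝ) (hh : Continuous h) :
      Continuous fun τ ↦ ∫ v in (-(π / 2))..(π / 2), τ * h (τ * cos v) :=
    intervalIntegral.continuous_parametric_intervalIntegral_of_continuous' (by fun_prop) _ _
  refine intervalIntegral.integral_mono_on hρ ((hcont f hf).intervalIntegrable _ _)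
    ((hcont g hg).intervalIntegrable _ _) fun τ ⟨hτ₀, hτρ⟩ ↦ ?_
  refine intervalIntegral.integral_mono_on (by linarith [pi_pos])
    ((by fun_prop : Continuous _).intervalIntegrable _ _)
    ((by fun_prop : Continuous _).intervalIntegrable _ _)
    fun v hv ↦ mul_le_mul_of_nonneg_left (hfg _ ⟨?_, ?_⟩) hτ₀
  · exact mul_nonneg hτ₀ (cos_nonneg_of_mem_Icc hv)
  · exact (mul_le_of_le_one_right hτ₀ (cos_le_one v)).trans hτρ

lemma ballIntegral_sum_pow {ι : Type*} (s : Finset ι) (c : ι → ℝ) (m : ι → ℕ) (ρ : ℝ) :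
    ballIntegral (fun x ↦ ∑ i ∈ s, c i * x ^ m i) ρ =
      ∑ i ∈ s, c i * (ρ ^ (m i + 2) / (m i + 2)) * ∫ v in (-(π / 2))..(π / 2), cos v ^ m i := by
  have inner (τ : ℝ) : ∫ v in (-(π / 2))..(π / 2), τ * ∑ i ∈ s, c i * (τ * cos v) ^ m i =
      ∑ i ∈ s, (c i * ∫ v in (-(π / 2))..(π / 2), cos v ^ m i) * τ ^ (m i + 1) := by
    have hterm (i : ι) (v : ℝ) :
        τ * (c i * (τ * cos v) ^ m i) = c i * τ ^ (m i + 1) * cos v ^ m i := by ring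
    simp_rw [mul_sum, hterm]
    rw [intervalIntegral.integral_finsetSum fun i _ ↦
      (by fun_prop : Continuous _).intervalIntegrable _ _]
    simp_rw [intervalIntegral.integral_const_mul]
    exact sum_congr rfl fun i _ ↦ by ring
  rw [ballIntegral]
  simp_rw [inner]
  rw [intervalIntegral.integral_finsetSum fun i _ ↦
    (by fun_prop : Continuous _).intervalIntegrable _ _]
  simp_rw [intervalIntegral.integral_const_mul, integral_pow]
  refine sum_congr rfl fun i _ ↦ ?_
  push_cast
  ring

lemma ballIntegral_sinTaylor (n : ℕ) (ρ : ℝ) :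
    ballIntegral (sinTaylor n) ρ = ∑ i ∈ range n,
      (-1 : ℝ) ^ i / (2 * i + 1)! * (ρ ^ (2 * i + 3) / (2 * i + 3)) *
        (2 * ∏ j ∈ range i, (2 * (j : ℝ) + 2) / (2 * j + 3)) := by
  have hsin : sinTaylor n =
      fun x ↦ ∑ i ∈ range n, (-1 : ℝ) ^ i / (2 * i + 1)! * x ^ (2 * i + 1) :=
    funext fun x ↦ sum_congr rfl fun i _ ↦ by ring
  rw [hsin, ballIntegral_sum_pow]
  refine sum_congr rfl fun i _ ↦ ?_
  rw [integral_cos_pow_odd]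
  push_cast
  ring_nf

lemma ballIntegral_sinTaylor_even_le (k : ℕ) {ρ : ℝ} (hρ₀ : 0 ≤ ρ) (hρ : ρ ^ 2 ≤ 6) :
    ballIntegral (sinTaylor (2 * k)) ρ ≤ ballIntegral sin ρ :=
  ballIntegral_mono (by unfold sinTaylor; fun_prop) continuous_sin hρ₀ fun _ hx ↦
    sinTaylor_even_le_sin k hx.1 ((pow_le_pow_left₀ hx.1 hx.2 2).trans hρ)

lemma ballIntegral_le_sinTaylor_odd (k : ℕ) {ρ : ℝ} (hρ₀ : 0 ≤ ρ) (hρ : ρ ^ 2 ≤ 6) :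
    ballIntegral sin ρ ≤ ballIntegral (sinTaylor (2 * k + 1)) ρ :=
  ballIntegral_mono continuous_sin (by unfold sinTaylor; fun_prop) hρ₀ fun _ hx ↦
    sin_le_sinTaylor_odd k hx.1 ((pow_le_pow_left₀ hx.1 hx.2 2).trans hρ)

lemma lt_four_mul_ballIntegral_sinTaylor_four :
    0.3946 < 4 * ballIntegral (sinTaylor 4) (π / 4) / π := by
  have heval : 4 * ballIntegral (sinTaylor 4) (π / 4) / π =
      π ^ 2 / 24 - π ^ 4 / 5760 + π ^ 6 / 3225600 - π ^ 8 / 3251404800 := by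
    rw [ballIntegral_sinTaylor]
    norm_num [sum_range_succ, prod_range_succ, factorial]
    field_simp
    ring
  have h2 := pow_lt_pow_left₀ pi_gt_d6 (by norm_num) (n := 2) (by norm_num)
  have h4 := pow_lt_pow_left₀ pi_lt_d6 pi_pos.le (n := 4) (by norm_num)
  have h6 := pow_lt_pow_left₀ pi_gt_d6 (by norm_num) (n := 6) (by norm_num)
  have h8 := pow_lt_pow_left₀ pi_lt_d6 pi_pos.le (n := 8) (by norm_num)
  norm_num at h2 h4 h6 h8
  rw [heval]
  linarith

lemma four_mul_ballIntegral_sinTaylor_three_lt :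
    4 * ballIntegral (sinTaylor 3) (π / 4) / π < 0.3947 := by
  have heval : 4 * ballIntegral (sinTaylor 3) (π / 4) / π =
      π ^ 2 / 24 - π ^ 4 / 5760 + π ^ 6 / 3225600 := by
    rw [ballIntegral_sinTaylor]
    norm_num [sum_range_succ, prod_range_succ, factorial]
    field_simp
    ring
  have h2 := pow_lt_pow_left₀ pi_lt_d6 pi_pos.le (n := 2) (by norm_num)
  have h4 := pow_lt_pow_left₀ pi_gt_d6 (by norm_num) (n := 4) (by norm_num)
  have h6 := pow_lt_pow_left₀ pi_lt_d6 pi_pos.le (n := 6) (by norm_num)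
  norm_num at h2 h4 h6
  rw [heval]
  linarith

/-- The density `δ(R₂, K₂) ≈ 0.39461737` of the simply transitive packing with
`R₂ = π/4` (equation (2.9)): the Dirichlet–Voronoi cell is a trigonal prism of volume
`π²/2`, so the density is `2 · V(π/4) / π²`. -/
theorem density_R2_bounds :
    0.3946 < 2 * ballVol (π / 4) / π ^ 2 ∧ 2 * ballVol (π / 4) / π ^ 2 < 0.3947 := by
  have hρ₀ : 0 ≤ π / 4 := by positivity
  have hρ : (π / 4) ^ 2 ≤ 6 := by nlinarith [pi_lt_four, pi_pos]
  have hdensity : 2 * ballVol (π / 4) / π ^ 2 = 4 * ballIntegral sin (π / 4) / π := by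
    rw [ballVol_eq_two_pi_mul_ballIntegral]
    field_simp
    ring
  rw [hdensity]
  constructor
  · calc (0.3946 : ℝ) < 4 * ballIntegral (sinTaylor (2 * 2)) (π / 4) / π :=
          lt_four_mul_ballIntegral_sinTaylor_four
      _ ≤ 4 * ballIntegral sin (π / 4) / π := by
          gcongr
          exact ballIntegral_sinTaylor_even_le 2 hρ₀ hρ
  · calc 4 * ballIntegral sin (π / 4) / π
        ≤ 4 * ballIntegral (sinTaylor (2 * 1 + 1)) (π / 4) / π := by
          gcongr
          exact ballIntegral_le_sinTaylor_odd 1 hρ₀ hρ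
      _ < 0.3947 := four_mul_ballIntegral_sinTaylor_three_lt
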